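/- Let μ be φ-mixing with Σ_{i=1}^∞ φ(i) < ∞, let ε > 0, let (U_n) be a sequence of sets with U_n a union of n-cylinders for each n, and let (γ_n) be a sequence of positive numbers. Suppose there are constants C, a, b > 0 such that for all n large enough one of the following holds: (I) μ(U_n) ≥ C e^{−γ_n(h_μ + ε)} and (n − γ_n)h_μ − ε(n + γ_n) ≥ a n^b; or (II) μ(U_n) ≥ C e^{−γ_n(h_μ − ε)} and (n − γ_n)(h_μ − ε) ≥ a n^b. Then for μ × μ-almost every (x,z), for all n large enough, N_{U_n, τ_n^z(x)}(x) ≥ (μ(U_n)/2) e^{n(h_μ − ε)}. -/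

import Mathlib

open MeasureTheory Filter Set

variable {Ω : Type*} [MeasurableSpace Ω]

/-- The `n`-cylinder containing `x`, for the countable measurable partition given by the
symbol map `P` and its joins under the dynamics `T`. -/
def cylAt (T : Ω → Ω) (P : Ω → ℕ) (n : ℕ) (x : Ω) : Set Ω :=
  {y | ∀ i < n, P (T^[i] y) = P (T^[i] x)}

/-- The `n`-cylinder determined by a word `w` of length `n`. -/
def cylW (T : Ω → Ω) (P : Ω → ℕ) (n : ℕ) (w : Fin n → ℕ) : Set Ω :=
  {y | ∀ i : Fin n, P (T^[(i : ℕ)] y) = w i}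

/-- The collection of all cylinder sets (elements of all the joins `𝒜ⁿ`). -/
def cylSets (T : Ω → Ω) (P : Ω → ℕ) : Set (Set Ω) :=
  {A | ∃ n, ∃ w : Fin n → ℕ, A = cylW T P n w}

/-- The partition is generating: every measurable set agrees mod `μ`-null sets with a set in
the σ-algebra generated by the cylinders. -/
def GeneratingPartition (T : Ω → Ω) (P : Ω → ℕ) (μ : Measure Ω) : Prop :=
  ∀ s : Set Ω, MeasurableSet s →
    ∃ t : Set Ω, MeasurableSet[MeasurableSpace.generateFrom (cylSets T P)] t ∧
      μ (symmDiff s t) = 0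

/-- First entrance time `τ_A(x) = min {i ≥ 1 : T^i x ∈ A}` (junk value `0` if the orbit
never enters `A`). -/
noncomputable def hitTime (T : Ω → Ω) (A : Set Ω) (x : Ω) : ℕ :=
  sInf {i | 1 ≤ i ∧ T^[i] x ∈ A}

/-- The Shannon–McMillan–Breiman property with constant `h`:
`-(1/n) log μ(A_n(x)) → h` for `μ`-a.e. `x`. -/
def SMB (T : Ω → Ω) (P : Ω → ℕ) (μ : Measure Ω) (h : ℝ) : Prop :=
  ∀ᵐ x ∂μ, Tendsto (fun n : ℕ => -Real.log ((μ (cylAt T P n x)).toReal) / n)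
    atTop (nhds h)

/-- The entrance-time distribution `F_z^n(t) = μ {x : τ_{A_n(z)}(x) ≥ t / μ(A_n(z))}`. -/
noncomputable def Fdist (T : Ω → Ω) (P : Ω → ℕ) (μ : Measure Ω) (z : Ω) (n : ℕ)
    (t : ℝ) : ℝ :=
  (μ {x | t / (μ (cylAt T P n z)).toReal ≤ (hitTime T (cylAt T P n z) x : ℝ)}).toReal

/-- `μ` is `φ`-mixing: `|μ(A ∩ T^{-(n+i)}B) - μ(A)μ(B)| ≤ φ(i) μ(A)` for every `n`-cylinder
`A` and every `B` in the σ-algebra generated by all cylinders, with `φ` decreasing. -/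
def PhiMixing (T : Ω → Ω) (P : Ω → ℕ) (μ : Measure Ω) (φ : ℕ → ℝ) : Prop :=
  Antitone φ ∧
  ∀ (n i : ℕ) (w : Fin n → ℕ) (B : Set Ω),
    MeasurableSet[MeasurableSpace.generateFrom (cylSets T P)] B →
    |(μ (cylW T P n w ∩ T^[n + i] ⁻¹' B)).toReal -
        (μ (cylW T P n w)).toReal * (μ B).toReal| ≤
      φ i * (μ (cylW T P n w)).toReal

/-- The partition `{P = j}_j` has an exponentially decaying tail:
`μ(∪_{i ≥ j} 𝒫_i) ≤ c δ^j` for some `c > 0` and `0 ≤ δ < 1`. -/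
def ExpTail (P : Ω → ℕ) (μ : Measure Ω) : Prop :=
  ∃ c > (0 : ℝ), ∃ δ : ℝ, 0 ≤ δ ∧ δ < 1 ∧
    ∀ j : ℕ, (μ {x | j ≤ P x}).toReal ≤ c * δ ^ j

/-- `Z_n(s) = Σ_{A ∈ 𝒜ⁿ} μ(A)^{1+s}`. -/
noncomputable def Zfun (T : Ω → Ω) (P : Ω → ℕ) (μ : Measure Ω) (n : ℕ) (s : ℝ) : ℝ :=
  ∑' w : Fin n → ℕ, (μ (cylW T P n w)).toReal ^ (1 + s)

/-- `W_n^s(x,z) = Σ_{i=1}^{τ_{A_n(z)}(x)} μ(A_n(T^i x))^s`. -/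
noncomputable def W (T : Ω → Ω) (P : Ω → ℕ) (μ : Measure Ω) (s : ℝ) (n : ℕ)
    (x z : Ω) : ℝ :=
  ∑ i ∈ Finset.Icc 1 (hitTime T (cylAt T P n z) x),
    (μ (cylAt T P n (T^[i] x))).toReal ^ s

/-- The hitting number `N_{U,M}(x) = Σ_{i=0}^M χ_U(T^i x)`. -/
noncomputable def hitNum (T : Ω → Ω) (U : Set Ω) (M : ℕ) (x : Ω) : ℕ :=
  ∑ i ∈ Finset.range (M + 1), U.indicator (fun _ => 1) (T^[i] x)

/-- `U` is a union of `n`-cylinders (i.e. `U ∈ σ(𝒜ⁿ)`). -/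
def UnionOfCyl (T : Ω → Ω) (P : Ω → ℕ) (n : ℕ) (U : Set Ω) : Prop :=
  ∃ S : Set (Fin n → ℕ), U = ⋃ w ∈ S, cylW T P n w


section AuxA

variable {T : Ω → Ω} {P : Ω → ℕ}
set_option linter.unusedSectionVars false

lemma cylAt_eq_cylW (T : Ω → Ω) (P : Ω → ℕ) (n : ℕ) (x : Ω) :
    cylAt T P n x = cylW T P n (fun i => P (T^[(i:ℕ)] x)) := by
  ext y
  constructor
  · exact fun hy i => hy i i.2
  · exact fun hy i hi => hy ⟨i, hi⟩

lemma measurableSet_cylW (hT : Measurable T) (hP : Measurable P) (n : ℕ) (w : Fin n → ℕ) :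
    MeasurableSet (cylW T P n w) := by
  have : cylW T P n w = ⋂ i : Fin n, (fun y => P (T^[(i:ℕ)] y)) ⁻¹' {w i} := by
    ext y; simp [cylW, Set.mem_iInter]
  rw [this]
  exact MeasurableSet.iInter fun i => (hP.comp (hT.iterate i)) (measurableSet_singleton _)

lemma measurableSet_cylAt (hT : Measurable T) (hP : Measurable P) (n : ℕ) (x : Ω) :
    MeasurableSet (cylAt T P n x) := by
  rw [cylAt_eq_cylW]; exact measurableSet_cylW hT hP n _

lemma genMeasurableSet_cylW (n : ℕ) (w : Fin n → ℕ) :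
    MeasurableSet[MeasurableSpace.generateFrom (cylSets T P)] (cylW T P n w) :=
  MeasurableSpace.measurableSet_generateFrom ⟨n, w, rfl⟩

lemma disjoint_cylW (n : ℕ) : Set.univ.PairwiseDisjoint (fun w : Fin n → ℕ => cylW T P n w) := by
  intro w _ w' _ hww
  refine Set.disjoint_left.2 fun y hy hy' => hww ?_
  funext i
  rw [← hy i, ← hy' i]

lemma mem_cylAt_self (T : Ω → Ω) (P : Ω → ℕ) (n : ℕ) (x : Ω) : x ∈ cylAt T P n x :=
  fun _ _ => rfl

/-- never-hit set is null for ergodic maps -/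
lemma never_hit_null {μ : Measure Ω} [IsProbabilityMeasure μ] (herg : Ergodic T μ)
    {A : Set Ω} (hA : MeasurableSet A) (hA0 : μ A ≠ 0) :
    μ {x | ∀ i, 1 ≤ i → T^[i] x ∉ A} = 0 := by
  set V : Set Ω := ⋃ i ∈ {i : ℕ | 1 ≤ i}, T^[i] ⁻¹' A with hV
  have hVmeas : MeasurableSet V :=
    MeasurableSet.biUnion (Set.to_countable _)
      (fun i _ => (herg.measurable.iterate i) hA)
  have hsub : T ⁻¹' V ⊆ V := by
    rintro x hx
    simp only [hV, Set.mem_iUnion, Set.mem_preimage, Set.mem_setOf_eq] at hx ⊢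
    obtain ⟨i, hi, hmem⟩ := hx
    exact ⟨i + 1, by omega, by rwa [Function.iterate_succ_apply]⟩
  have := herg.ae_empty_or_univ_of_preimage_ae_le hVmeas.nullMeasurableSet
    (HasSubset.Subset.eventuallyLE hsub)
  rcases this with h0 | h1
  · exfalso
    apply hA0
    have hsub2 : T ⁻¹' A ⊆ V := by
      intro x hx
      simp only [hV, Set.mem_iUnion, Set.mem_setOf_eq]
      exact ⟨1, le_refl _, by simpa using hx⟩
    have : μ (T ⁻¹' A) = 0 := le_antisymm ((measure_mono hsub2).trans (by
      rw [ae_eq_empty] at h0; exact h0.le)) zero_le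
    rwa [herg.toMeasurePreserving.measure_preimage hA.nullMeasurableSet] at this
  · have : {x | ∀ i, 1 ≤ i → T^[i] x ∉ A} = Vᶜ := by
      ext x
      simp [hV, Set.mem_iUnion, not_exists]
    rw [this]
    have := ae_eq_univ.1 h1
    exact this

end AuxA

section AuxB

set_option linter.unusedSectionVars false
variable {T : Ω → Ω} {P : Ω → ℕ} {μ : Measure Ω} [IsProbabilityMeasure μ]

lemma measurableSet_cylW' (hT : Measurable T) (hP : Measurable P) (n : ℕ) (w : Fin n → ℕ) :
    MeasurableSet (cylW T P n w) := by
  have : cylW T P n w = ⋂ i : Fin n, (fun y => P (T^[(i:ℕ)] y)) ⁻¹' {w i} := by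
    ext y; simp [cylW, Set.mem_iInter]
  rw [this]
  exact MeasurableSet.iInter fun i => (hP.comp (hT.iterate i)) (measurableSet_singleton _)

lemma disjoint_cylW' (n : ℕ) {S : Set (Fin n → ℕ)} :
    S.PairwiseDisjoint (fun w : Fin n → ℕ => cylW T P n w) := by
  intro w _ w' _ hww
  refine Set.disjoint_left.2 fun y hy hy' => hww ?_
  funext i
  rw [← hy i, ← hy' i]

lemma phi_nonneg {φ : ℕ → ℝ} (hanti : Antitone φ) (hsum : Summable φ) (i : ℕ) : 0 ≤ φ i :=
  le_of_tendsto hsum.tendsto_atTop_zero (Filter.eventually_atTop.2 ⟨i, fun m hm => hanti hm⟩)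

/-- decomposition of measure of intersection with a union of cylinders -/
lemma toReal_inter_biUnion (hT : Measurable T) (hP : Measurable P) (n : ℕ)
    (S : Set (Fin n → ℕ)) (V : Set Ω) (hV : MeasurableSet V) :
    (μ ((⋃ w ∈ S, cylW T P n w) ∩ V)).toReal
      = ∑' w : S, (μ (cylW T P n (w : Fin n → ℕ) ∩ V)).toReal := by
  have h1 : (⋃ w ∈ S, cylW T P n w) ∩ V = ⋃ w ∈ S, (cylW T P n w ∩ V) := by
    rw [Set.iUnion₂_inter]
  rw [h1, measure_biUnion (Set.to_countable S)
    (fun w hw w' hw' hww => ((disjoint_cylW' n hw hw' hww).inter_left V).inter_right V)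
    (fun w _ => (measurableSet_cylW' hT hP n w).inter hV)]
  exact ENNReal.tsum_toReal_eq fun w => measure_ne_top μ _

lemma summable_toReal_cyl (hT : Measurable T) (hP : Measurable P) (n : ℕ)
    (S : Set (Fin n → ℕ)) (V : Set Ω) (hV : MeasurableSet V) :
    Summable fun w : S => (μ (cylW T P n (w : Fin n → ℕ) ∩ V)).toReal := by
  apply ENNReal.summable_toReal
  have : ∑' w : S, μ (cylW T P n (w : Fin n → ℕ) ∩ V)
      = μ ((⋃ w ∈ S, cylW T P n w) ∩ V) := by
    rw [Set.iUnion₂_inter, measure_biUnion (Set.to_countable S)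
      (fun w hw w' hw' hww => ((disjoint_cylW' n hw hw' hww).inter_left V).inter_right V)
      (fun w _ => (measurableSet_cylW' hT hP n w).inter hV)]
  rw [this]
  exact measure_ne_top μ _

/-- mixing bound for a union of `n`-cylinders -/
lemma mix_union (hT : Measurable T) (hP : Measurable P)
    {φ : ℕ → ℝ} (hφ : PhiMixing T P μ φ) (n g : ℕ) (S : Set (Fin n → ℕ)) :
    (μ ((⋃ w ∈ S, cylW T P n w) ∩ T^[n + g] ⁻¹' (⋃ w ∈ S, cylW T P n w))).toReal ≤
      (μ (⋃ w ∈ S, cylW T P n w)).toReal ^ 2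
        + φ g * (μ (⋃ w ∈ S, cylW T P n w)).toReal := by
  set U := ⋃ w ∈ S, cylW T P n w with hU
  have hUmeas : MeasurableSet U :=
    MeasurableSet.biUnion (Set.to_countable S) fun w _ => measurableSet_cylW' hT hP n w
  have hUgen : MeasurableSet[MeasurableSpace.generateFrom (cylSets T P)] U :=
    MeasurableSet.biUnion (Set.to_countable S) fun w _ =>
      MeasurableSpace.measurableSet_generateFrom ⟨n, w, rfl⟩
  have hVmeas : MeasurableSet (T^[n+g] ⁻¹' U) := (hT.iterate (n+g)) hUmeas
  rw [toReal_inter_biUnion hT hP n S _ hVmeas]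
  have hsum1 := summable_toReal_cyl (μ := μ) hT hP n S _ hVmeas
  have hsum2 := summable_toReal_cyl (μ := μ) hT hP n S Set.univ MeasurableSet.univ
  simp only [Set.inter_univ] at hsum2
  have hbound : ∀ w : S, (μ (cylW T P n (w : Fin n → ℕ) ∩ T^[n+g] ⁻¹' U)).toReal ≤
      (μ (cylW T P n (w : Fin n → ℕ))).toReal * ((μ U).toReal + φ g) := by
    intro w
    have := hφ.2 n g w U hUgen
    have h2 := abs_le.1 this
    nlinarith [h2.2]
  calc ∑' w : S, (μ (cylW T P n (w : Fin n → ℕ) ∩ T^[n+g] ⁻¹' U)).toReal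
      ≤ ∑' w : S, (μ (cylW T P n (w : Fin n → ℕ))).toReal * ((μ U).toReal + φ g) :=
        Summable.tsum_le_tsum hbound hsum1 (hsum2.mul_right _)
    _ = (∑' w : S, (μ (cylW T P n (w : Fin n → ℕ))).toReal) * ((μ U).toReal + φ g) :=
        tsum_mul_right
    _ = (μ U).toReal * ((μ U).toReal + φ g) := by
        congr 1
        have := toReal_inter_biUnion (μ := μ) hT hP n S Set.univ MeasurableSet.univ
        simp only [Set.inter_univ] at this
        rw [← hU] at this
        rw [← this]
    _ = (μ U).toReal ^ 2 + φ g * (μ U).toReal := by ring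
end AuxB

section AuxC

set_option linter.unusedSectionVars false
variable {T : Ω → Ω} {P : Ω → ℕ} {μ : Measure Ω} [IsProbabilityMeasure μ]

lemma hitNum_cast (U : Set Ω) (M : ℕ) (x : Ω) :
    ((hitNum T U M x : ℕ) : ℝ)
      = ∑ i ∈ Finset.range (M + 1), (T^[i] ⁻¹' U).indicator (fun _ => (1:ℝ)) x := by
  rw [hitNum, Nat.cast_sum]
  refine Finset.sum_congr rfl fun i _ => ?_
  by_cases hx : T^[i] x ∈ U <;>
    simp [Set.indicator_apply, hx, Set.mem_preimage]

lemma hitNum_mono (U : Set Ω) {M M' : ℕ} (h : M ≤ M') (x : Ω) :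
    hitNum T U M x ≤ hitNum T U M' x := by
  apply Finset.sum_le_sum_of_subset
  exact Finset.range_subset_range.2 (by omega)

/-- Expectation of the hitting number. -/
lemma integral_hitNum (hT : Measurable T) (herg : MeasurePreserving T μ μ)
    {U : Set Ω} (hU : MeasurableSet U) (M : ℕ) :
    ∫ x, ((hitNum T U M x : ℕ) : ℝ) ∂μ = ((M:ℝ) + 1) * (μ U).toReal := by
  have : ∫ x, ((hitNum T U M x : ℕ) : ℝ) ∂μ
      = ∑ i ∈ Finset.range (M+1), ∫ x, (T^[i] ⁻¹' U).indicator (fun _ => (1:ℝ)) x ∂μ := by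
    simp_rw [hitNum_cast]
    exact integral_finset_sum _ fun i _ =>
      (integrable_const (1:ℝ)).indicator ((hT.iterate i) hU)
  rw [this]
  have heach : ∀ i, ∫ x, (T^[i] ⁻¹' U).indicator (fun _ => (1:ℝ)) x ∂μ = (μ U).toReal := by
    intro i
    rw [integral_indicator_const (1:ℝ) ((hT.iterate i) hU), measureReal_def,
      (herg.iterate i).measure_preimage hU.nullMeasurableSet]
    simp
  rw [Finset.sum_congr rfl fun i _ => heach i]
  simp [Finset.sum_const]

lemma measurable_hitNumR (hT : Measurable T) {U : Set Ω} (hU : MeasurableSet U) (M : ℕ) :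
    Measurable fun x => ((hitNum T U M x : ℕ) : ℝ) := by
  simp_rw [hitNum_cast]
  exact Finset.measurable_sum _ fun i _ =>
    (measurable_const.indicator ((hT.iterate i) hU))

lemma integrable_hitNumR (hT : Measurable T) {U : Set Ω} (hU : MeasurableSet U) (M : ℕ) :
    Integrable (fun x => ((hitNum T U M x : ℕ) : ℝ)) μ := by
  simp_rw [hitNum_cast]
  exact integrable_finset_sum _ fun i _ =>
    (integrable_const (1:ℝ)).indicator ((hT.iterate i) hU)

/-- second moment as a double sum -/
lemma integral_hitNum_sq (hT : Measurable T) {U : Set Ω} (hU : MeasurableSet U) (M : ℕ) :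
    ∫ x, ((hitNum T U M x : ℕ) : ℝ) ^ 2 ∂μ
      = ∑ i ∈ Finset.range (M+1), ∑ j ∈ Finset.range (M+1),
          (μ (T^[i] ⁻¹' U ∩ T^[j] ⁻¹' U)).toReal := by
  have hsq : ∀ x, ((hitNum T U M x : ℕ) : ℝ) ^ 2
      = ∑ i ∈ Finset.range (M+1), ∑ j ∈ Finset.range (M+1),
          (T^[i] ⁻¹' U ∩ T^[j] ⁻¹' U).indicator (fun _ => (1:ℝ)) x := by
    intro x
    rw [sq, hitNum_cast, Finset.sum_mul_sum]
    refine Finset.sum_congr rfl fun i _ => Finset.sum_congr rfl fun j _ => ?_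
    rw [← Set.inter_indicator_mul]
    simp
  simp_rw [hsq]
  rw [integral_finset_sum _ fun i _ => integrable_finset_sum _ fun j _ =>
    (integrable_const (1:ℝ)).indicator (((hT.iterate i) hU).inter ((hT.iterate j) hU))]
  refine Finset.sum_congr rfl fun i _ => ?_
  rw [integral_finset_sum _ fun j _ =>
    (integrable_const (1:ℝ)).indicator (((hT.iterate i) hU).inter ((hT.iterate j) hU))]
  refine Finset.sum_congr rfl fun j _ => ?_
  rw [integral_indicator_const (1:ℝ) (((hT.iterate i) hU).inter ((hT.iterate j) hU))]
  simp
  rfl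

lemma measure_preimage_inter_le (herg : MeasurePreserving T μ μ) (hT : Measurable T)
    {U : Set Ω} (hU : MeasurableSet U) {i j : ℕ} (hij : i ≤ j) :
    μ (T^[i] ⁻¹' U ∩ T^[j] ⁻¹' U) = μ (U ∩ T^[j - i] ⁻¹' U) := by
  have h1 : T^[j] ⁻¹' U = T^[i] ⁻¹' (T^[j-i] ⁻¹' U) := by
    rw [← Set.preimage_comp, ← Function.iterate_add, Nat.sub_add_cancel hij]
  rw [h1, ← Set.preimage_inter,
    (herg.iterate i).measure_preimage (hU.inter ((hT.iterate (j-i)) hU)).nullMeasurableSet]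

end AuxC

section AuxD


lemma inner_sum_bound (eb : ℕ → ℝ) (heb : ∀ d, 0 ≤ eb d) {i M : ℕ} (hi : i ≤ M) :
    ∑ j ∈ Finset.range (M+1), (if i ≤ j then eb (j - i) else eb (i - j))
      ≤ 2 * ∑ d ∈ Finset.range (M+1), eb d := by
  have hsplit : Finset.range (M+1) = Finset.Ico 0 i ∪ Finset.Ico i (M+1) := by
    rw [Finset.range_eq_Ico]
    rw [Finset.Ico_union_Ico_eq_Ico (Nat.zero_le i) (by omega)]
  have hLHS : ∑ j ∈ Finset.range (M+1), (if i ≤ j then eb (j - i) else eb (i - j))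
      = (∑ j ∈ Finset.Ico 0 i, (if i ≤ j then eb (j - i) else eb (i - j)))
        + ∑ j ∈ Finset.Ico i (M+1), (if i ≤ j then eb (j - i) else eb (i - j)) := by
    rw [hsplit]
    exact Finset.sum_union (Finset.Ico_disjoint_Ico_consecutive _ _ _)
  rw [hLHS]
  have hA : ∑ j ∈ Finset.Ico i (M+1), (if i ≤ j then eb (j - i) else eb (i - j))
      ≤ ∑ d ∈ Finset.range (M+1), eb d := by
    rw [Finset.sum_Ico_eq_sum_range]
    have : ∀ k ∈ Finset.range (M+1-i), (if i ≤ i + k then eb (i + k - i) else eb (i - (i+k))) = eb k := by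
      intro k _
      rw [if_pos (Nat.le_add_right i k)]
      congr 1
      omega
    rw [Finset.sum_congr rfl this]
    exact Finset.sum_le_sum_of_subset_of_nonneg
      (Finset.range_subset_range.2 (by omega)) (fun d _ _ => heb d)
  have hB : ∑ j ∈ Finset.Ico 0 i, (if i ≤ j then eb (j - i) else eb (i - j))
      ≤ ∑ d ∈ Finset.range (M+1), eb d := by
    rw [← Finset.range_eq_Ico]
    have h1 : ∀ j ∈ Finset.range i, (if i ≤ j then eb (j - i) else eb (i - j)) = eb (i - j) := by
      intro j hj
      rw [if_neg (by simp at hj; omega)]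
    rw [Finset.sum_congr rfl h1]
    have h2 : ∑ j ∈ Finset.range i, eb (i - j) = ∑ j ∈ Finset.range i, eb (j + 1) := by
      rw [← Finset.sum_range_reflect (fun j => eb (j + 1)) i]
      refine Finset.sum_congr rfl fun j hj => ?_
      simp only [Finset.mem_range] at hj
      congr 1
      omega
    rw [h2]
    have h3 : ∑ j ∈ Finset.range i, eb (j + 1) = ∑ d ∈ Finset.Ico 1 (i+1), eb d := by
      rw [Finset.sum_Ico_eq_sum_range]
      simp only [Nat.add_sub_cancel]
      exact Finset.sum_congr rfl fun k _ => by rw [Nat.add_comm]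
    rw [h3]
    exact Finset.sum_le_sum_of_subset_of_nonneg
      (by intro d hd; simp only [Finset.mem_Ico, Finset.mem_range] at *; omega)
      (fun d _ _ => heb d)
  linarith

lemma eb_sum_bound (φ : ℕ → ℝ) (hφ0 : ∀ i, 0 ≤ φ i) (Φ : ℝ)
    (hΦ : ∀ K, ∑ g ∈ Finset.range K, φ g ≤ Φ) (p : ℝ) (hp : 0 ≤ p) (n M : ℕ) :
    ∑ d ∈ Finset.range (M+1), (if d < n then p else φ (d - n) * p) ≤ n * p + Φ * p := by
  have hsplit : ∀ d, (if d < n then p else φ (d - n) * p)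
      = (if d < n then p else 0) + (if d < n then 0 else φ (d - n) * p) := by
    intro d; by_cases h : d < n <;> simp [h]
  rw [Finset.sum_congr rfl fun d _ => hsplit d, Finset.sum_add_distrib]
  have h1 : ∑ d ∈ Finset.range (M+1), (if d < n then p else 0) ≤ n * p := by
    rw [← Finset.sum_filter]
    have : ((Finset.range (M+1)).filter (· < n)).card ≤ n := by
      calc ((Finset.range (M+1)).filter (· < n)).card ≤ (Finset.range n).card := by
            apply Finset.card_le_card
            intro d hd
            simp only [Finset.mem_filter, Finset.mem_range] at *
            omega
        _ = n := Finset.card_range n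
    calc ∑ _d ∈ (Finset.range (M+1)).filter (· < n), p
        = ((Finset.range (M+1)).filter (· < n)).card * p := by rw [Finset.sum_const]; ring
      _ ≤ n * p := by
          apply mul_le_mul_of_nonneg_right _ hp
          exact_mod_cast this
  have h2 : ∑ d ∈ Finset.range (M+1), (if d < n then 0 else φ (d - n) * p) ≤ Φ * p := by
    have hIco : ∑ d ∈ Finset.range (M+1), (if d < n then 0 else φ (d - n) * p)
        = ∑ d ∈ Finset.Ico n (M+1), φ (d - n) * p := by
      rw [Finset.range_eq_Ico]
      rcases le_or_gt n (M+1) with hn | hn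
      · rw [← Finset.Ico_union_Ico_eq_Ico (Nat.zero_le n) hn,
          Finset.sum_union (Finset.Ico_disjoint_Ico_consecutive _ _ _)]
        have hz : ∑ d ∈ Finset.Ico 0 n, (if d < n then 0 else φ (d - n) * p) = 0 := by
          apply Finset.sum_eq_zero
          intro d hd
          simp only [Finset.mem_Ico] at hd
          rw [if_pos hd.2]
        rw [hz, zero_add]
        refine Finset.sum_congr rfl fun d hd => ?_
        simp only [Finset.mem_Ico] at hd
        rw [if_neg (by omega)]
      · have : Finset.Ico n (M+1) = ∅ := by
          apply Finset.Ico_eq_empty; omega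
        rw [this, Finset.sum_empty]
        apply Finset.sum_eq_zero
        intro d hd
        simp only [Finset.mem_Ico] at hd
        rw [if_pos (by omega)]
    rw [hIco, Finset.sum_Ico_eq_sum_range]
    simp only [Nat.add_sub_cancel_left]
    rw [← Finset.sum_mul]
    exact mul_le_mul_of_nonneg_right (hΦ _) hp
  linarith

lemma double_sum_bound (F : ℕ → ℕ → ℝ) (n M : ℕ) (p Φ : ℝ) (hp : 0 ≤ p)
    (φ : ℕ → ℝ) (hφ0 : ∀ i, 0 ≤ φ i) (hΦ : ∀ K, ∑ g ∈ Finset.range K, φ g ≤ Φ)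
    (hsymm : ∀ i j, F i j = F j i)
    (hF : ∀ i j, i ≤ j → F i j ≤ p^2 + (if j - i < n then p else φ (j - i - n) * p)) :
    ∑ i ∈ Finset.range (M+1), ∑ j ∈ Finset.range (M+1), F i j
      ≤ ((M:ℝ)+1)^2 * p^2 + 2 * ((M:ℝ)+1) * (n * p + Φ * p) := by
  set eb : ℕ → ℝ := fun d => if d < n then p else φ (d - n) * p with heb_def
  have heb : ∀ d, 0 ≤ eb d := by
    intro d
    simp only [heb_def]
    split
    · exact hp
    · exact mul_nonneg (hφ0 _) hp
  have hFib : ∀ i j, F i j ≤ p^2 + (if i ≤ j then eb (j - i) else eb (i - j)) := by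
    intro i j
    rcases le_or_gt i j with h | h
    · rw [if_pos h]; exact hF i j h
    · rw [if_neg (by omega), hsymm i j]; exact hF j i h.le
  calc ∑ i ∈ Finset.range (M+1), ∑ j ∈ Finset.range (M+1), F i j
      ≤ ∑ i ∈ Finset.range (M+1), ∑ j ∈ Finset.range (M+1),
          (p^2 + (if i ≤ j then eb (j - i) else eb (i - j))) :=
        Finset.sum_le_sum fun i _ => Finset.sum_le_sum fun j _ => hFib i j
    _ = ∑ i ∈ Finset.range (M+1), (((M:ℝ)+1) * p^2
          + ∑ j ∈ Finset.range (M+1), (if i ≤ j then eb (j - i) else eb (i - j))) := by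
        refine Finset.sum_congr rfl fun i _ => ?_
        rw [Finset.sum_add_distrib, Finset.sum_const, Finset.card_range]
        push_cast
        ring
    _ ≤ ∑ i ∈ Finset.range (M+1), (((M:ℝ)+1) * p^2 + 2 * ∑ d ∈ Finset.range (M+1), eb d) := by
        refine Finset.sum_le_sum fun i hi => ?_
        have := inner_sum_bound eb heb (i := i) (M := M) (by simpa using Nat.lt_succ_iff.1 (Finset.mem_range.1 hi))
        linarith
    _ ≤ ∑ i ∈ Finset.range (M+1), (((M:ℝ)+1) * p^2 + 2 * (n * p + Φ * p)) := by
        refine Finset.sum_le_sum fun i _ => ?_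
        have := eb_sum_bound φ hφ0 Φ hΦ p hp n M
        simp only [heb_def] at *
        linarith
    _ = ((M:ℝ)+1)^2 * p^2 + 2 * ((M:ℝ)+1) * (n * p + Φ * p) := by
        rw [Finset.sum_const, Finset.card_range]
        push_cast
        ring

end AuxD

section AuxE
set_option linter.unusedSectionVars false
variable {Ω : Type*} [MeasurableSpace Ω]
variable {T : Ω → Ω} {P : Ω → ℕ} {μ : Measure Ω} [IsProbabilityMeasure μ]

lemma integrable_hitNumR_sq (hT : Measurable T) {U : Set Ω} (hU : MeasurableSet U) (M : ℕ) :
    Integrable (fun x => ((hitNum T U M x : ℕ) : ℝ) ^ 2) μ := by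
  have hsq : ∀ x, ((hitNum T U M x : ℕ) : ℝ) ^ 2
      = ∑ i ∈ Finset.range (M+1), ∑ j ∈ Finset.range (M+1),
          (T^[i] ⁻¹' U ∩ T^[j] ⁻¹' U).indicator (fun _ => (1:ℝ)) x := by
    intro x
    rw [sq, hitNum_cast, Finset.sum_mul_sum]
    refine Finset.sum_congr rfl fun i _ => Finset.sum_congr rfl fun j _ => ?_
    rw [← Set.inter_indicator_mul]
    simp
  simp_rw [hsq]
  exact integrable_finset_sum _ fun i _ => integrable_finset_sum _ fun j _ =>
    (integrable_const (1:ℝ)).indicator (((hT.iterate i) hU).inter ((hT.iterate j) hU))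

/-- Chebyshev-type bound for the hitting number of a union of `n`-cylinders. -/
lemma cheby_main (hT : Measurable T) (hP : Measurable P) (herg : MeasurePreserving T μ μ)
    {φ : ℕ → ℝ} (hφ : PhiMixing T P μ φ) (hφs : Summable φ)
    (n M : ℕ) (S : Set (Fin n → ℕ)) {U : Set Ω} (hUS : U = ⋃ w ∈ S, cylW T P n w) :
    ((((M:ℝ)+1) * (μ U).toReal / 2) ^ 2) *
      (μ {x | ((hitNum T U M x : ℕ) : ℝ) ≤ ((M:ℝ)+1) * (μ U).toReal / 2}).toReal
      ≤ 2 * ((M:ℝ)+1) * ((n : ℝ) * (μ U).toReal + (∑' i, φ i) * (μ U).toReal) := by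
  have hφ0 : ∀ i, 0 ≤ φ i := phi_nonneg hφ.1 hφs
  have hUmeas : MeasurableSet U := by
    rw [hUS]
    exact MeasurableSet.biUnion (Set.to_countable S) fun w _ => measurableSet_cylW hT hP n w
  set p := (μ U).toReal with hp_def
  have hp : 0 ≤ p := ENNReal.toReal_nonneg
  set c : ℝ := ((M:ℝ)+1) * p with hc_def
  have hc : 0 ≤ c := by positivity
  set N : Ω → ℝ := fun x => ((hitNum T U M x : ℕ) : ℝ) with hN_def
  have hNint : Integrable N μ := integrable_hitNumR hT hUmeas M
  have hN2int : Integrable (fun x => N x ^ 2) μ := integrable_hitNumR_sq hT hUmeas M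
  have hIntN : ∫ x, N x ∂μ = c := integral_hitNum hT herg hUmeas M
  -- second moment bound
  have hIntN2 : ∫ x, N x ^ 2 ∂μ
      ≤ ((M:ℝ)+1)^2 * p^2 + 2 * ((M:ℝ)+1) * ((n:ℝ) * p + (∑' i, φ i) * p) := by
    rw [hN_def]
    simp only
    rw [integral_hitNum_sq hT hUmeas M]
    refine double_sum_bound (fun i j => (μ (T^[i] ⁻¹' U ∩ T^[j] ⁻¹' U)).toReal) n M p
      (∑' i, φ i) hp φ hφ0 (fun K => Summable.sum_le_tsum _ (fun i _ => hφ0 i) hφs) ?_ ?_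
    · intro i j; rw [Set.inter_comm (T^[i] ⁻¹' U)]
    · intro i j hij
      rw [measure_preimage_inter_le herg hT hUmeas hij]
      by_cases hd : j - i < n
      · rw [if_pos hd]
        have h1 : (μ (U ∩ T^[j-i] ⁻¹' U)).toReal ≤ p := by
          rw [hp_def]
          exact ENNReal.toReal_mono (measure_ne_top μ U) (measure_mono Set.inter_subset_left)
        nlinarith [sq_nonneg p]
      · rw [if_neg hd]
        have hn : n ≤ j - i := by omega
        have h2 := mix_union (μ := μ) hT hP hφ n (j - i - n) S
        rw [← hUS] at h2
        rw [Nat.add_sub_cancel' hn] at h2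
        rw [← hp_def] at h2
        linarith [h2]
  set A : Set Ω := {x | N x ≤ c / 2} with hA_def
  have hAmeas : MeasurableSet A :=
    measurableSet_le (measurable_hitNumR hT hUmeas M) measurable_const
  have hVarInt : Integrable (fun x => (N x - c)^2) μ := by
    have : (fun x => (N x - c)^2) = fun x => (N x ^ 2 - (2*c) * N x) + c^2 := by
      funext x; ring
    rw [this]
    exact (hN2int.sub (hNint.const_mul (2*c))).add (integrable_const _)
  have hVar : ∫ x, (N x - c)^2 ∂μ = (∫ x, N x ^ 2 ∂μ) - c^2 := by
    have h1 : (fun x => (N x - c)^2) = fun x => (N x ^ 2 - (2*c) * N x) + c^2 := by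
      funext x; ring
    have hsubint : Integrable (fun x => N x ^ 2 - (2*c) * N x) μ :=
      hN2int.sub (hNint.const_mul (2*c))
    rw [h1, integral_add hsubint (integrable_const _),
      integral_sub hN2int (hNint.const_mul (2*c)), MeasureTheory.integral_const_mul, hIntN]
    simp
    ring
  have step1 : (c/2)^2 * (μ A).toReal = ∫ _x in A, (c/2)^2 ∂μ := by
    rw [setIntegral_const, smul_eq_mul, measureReal_def]
    ring
  have step2 : ∫ _x in A, (c/2)^2 ∂μ ≤ ∫ x in A, (N x - c)^2 ∂μ := by
    refine setIntegral_mono_on integrableOn_const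
      hVarInt.integrableOn hAmeas fun x hx => ?_
    have hxA : N x ≤ c/2 := hx
    have h3 : (N x - c)^2 = (c - N x)^2 := by ring
    rw [h3]
    have h4 : c/2 ≤ c - N x := by linarith
    have h5 : (0:ℝ) ≤ c/2 := by linarith
    exact pow_le_pow_left₀ h5 h4 2
  have step3 : ∫ x in A, (N x - c)^2 ∂μ ≤ ∫ x, (N x - c)^2 ∂μ :=
    setIntegral_le_integral hVarInt (Filter.Eventually.of_forall fun x => sq_nonneg _)
  have hfinal : (c/2)^2 * (μ A).toReal ≤ 2 * ((M:ℝ)+1) * ((n:ℝ) * p + (∑' i, φ i) * p) := by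
    have := step1.le.trans (step2.trans (step3.trans_eq hVar))
    rw [hc_def] at this ⊢
    nlinarith [this]
  exact hfinal

end AuxE

section AuxF
set_option linter.unusedSectionVars false
variable {Ω : Type*} [MeasurableSpace Ω]
variable {T : Ω → Ω} {P : Ω → ℕ} {μ : Measure Ω} [IsProbabilityMeasure μ]

/-- Borel-Cantelli helper with an eventual real bound. -/
lemma bc_helper {α : Type*} [MeasurableSpace α] (μ : Measure α) [IsFiniteMeasure μ]
    (s : ℕ → Set α) (v : ℕ → ℝ) (hv0 : ∀ n, 0 ≤ v n) (hv : Summable v)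
    (hb : ∀ᶠ n in atTop, μ (s n) ≤ ENNReal.ofReal (v n)) :
    ∀ᵐ x ∂μ, ∀ᶠ n in atTop, x ∉ s n := by
  obtain ⟨N₀, hN₀⟩ := Filter.eventually_atTop.1 hb
  refine MeasureTheory.ae_eventually_notMem (ne_of_lt ?_)
  have key : ∀ n, μ (s n) ≤ (if n < N₀ then μ (s n) else 0) + ENNReal.ofReal (v n) := by
    intro n
    by_cases hn : n < N₀
    · simp [hn, le_add_right]
    · simp only [hn, if_false, zero_add]
      exact hN₀ n (by omega)
  calc ∑' n, μ (s n) ≤ ∑' n, ((if n < N₀ then μ (s n) else 0) + ENNReal.ofReal (v n)) :=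
        ENNReal.tsum_le_tsum key
    _ = (∑' n, (if n < N₀ then μ (s n) else 0)) + ∑' n, ENNReal.ofReal (v n) :=
        ENNReal.tsum_add
    _ < ⊤ := by
        apply ENNReal.add_lt_top.2
        constructor
        · have : ∑' n, (if n < N₀ then μ (s n) else 0)
              = ∑ n ∈ Finset.range N₀, (if n < N₀ then μ (s n) else 0) := by
            apply tsum_eq_sum
            intro n hn
            simp only [Finset.mem_range] at hn
            rw [if_neg hn]
          rw [this]
          refine (ENNReal.sum_lt_top).2 fun n _ => ?_
          split
          · exact measure_lt_top μ _
          · exact ENNReal.zero_lt_top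

        · rw [← ENNReal.ofReal_tsum_of_nonneg hv0 hv]
          exact ENNReal.ofReal_lt_top

lemma ae_of_fst {α β : Type*} [MeasurableSpace α] [MeasurableSpace β]
    (μ : Measure α) (ν : Measure β) [SFinite μ] [SFinite ν] [IsProbabilityMeasure ν]
    {p : α → Prop} (h : ∀ᵐ x ∂μ, p x) : ∀ᵐ q ∂(μ.prod ν), p q.1 := by
  rw [MeasureTheory.ae_iff] at h ⊢
  obtain ⟨t, hsub, htm, ht0⟩ := exists_measurable_superset_of_null h
  refine measure_mono_null (t := t ×ˢ Set.univ) (fun q hq => ?_) ?_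
  · exact Set.mem_prod.2 ⟨hsub hq, Set.mem_univ q.2⟩
  · rw [MeasureTheory.Measure.prod_prod, ht0, zero_mul]

lemma ae_of_snd {α β : Type*} [MeasurableSpace α] [MeasurableSpace β]
    (μ : Measure α) (ν : Measure β) [SFinite μ] [SFinite ν] [IsProbabilityMeasure μ]
    {p : β → Prop} (h : ∀ᵐ y ∂ν, p y) : ∀ᵐ q ∂(μ.prod ν), p q.2 := by
  rw [MeasureTheory.ae_iff] at h ⊢
  obtain ⟨t, hsub, htm, ht0⟩ := exists_measurable_superset_of_null h
  refine measure_mono_null (t := Set.univ ×ˢ t) (fun q hq => ?_) ?_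
  · exact Set.mem_prod.2 ⟨Set.mem_univ q.1, hsub hq⟩
  · rw [MeasureTheory.Measure.prod_prod, ht0, mul_zero]

lemma hitTime_le_iff {A : Set Ω} {x : Ω} {M : ℕ} :
    hitTime T A x ≤ M ↔
      (∀ i, 1 ≤ i → T^[i] x ∉ A) ∨ ∃ i, 1 ≤ i ∧ i ≤ M ∧ T^[i] x ∈ A := by
  constructor
  · intro hle
    by_cases hne : {i | 1 ≤ i ∧ T^[i] x ∈ A}.Nonempty
    · right
      have hmem := Nat.sInf_mem hne
      exact ⟨hitTime T A x, hmem.1, hle, hmem.2⟩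
    · left
      intro i hi hmem
      exact hne ⟨i, hi, hmem⟩
  · rintro (hnever | ⟨i, h1, hM, hmem⟩)
    · have : {i | 1 ≤ i ∧ T^[i] x ∈ A} = ∅ := by
        ext i; simp only [Set.mem_setOf_eq, Set.mem_empty_iff_false, iff_false, not_and]
        exact fun hi => hnever i hi
      rw [hitTime, this, Nat.sInf_empty]
      exact Nat.zero_le M
    · exact le_trans (Nat.sInf_le ⟨h1, hmem⟩) hM

lemma gt_of_hitTime_not_le {A : Set Ω} {x : Ω} {M : ℕ}
    (h : ¬ hitTime T A x ≤ M) : M < hitTime T A x := by omega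

/-- measure of points entering `A` within time `M` -/
lemma measure_hitTime_le (herg : Ergodic T μ) {A : Set Ω} (hA : MeasurableSet A)
    (hA0 : μ A ≠ 0) (M : ℕ) :
    μ {x | hitTime T A x ≤ M} ≤ (M : ENNReal) * μ A := by
  have hsub : {x | hitTime T A x ≤ M} ⊆
      {x | ∀ i, 1 ≤ i → T^[i] x ∉ A} ∪ ⋃ i ∈ Finset.Icc 1 M, T^[i] ⁻¹' A := by
    intro x hx
    rcases hitTime_le_iff.1 hx with hnever | ⟨i, h1, hM, hmem⟩
    · exact Or.inl hnever
    · exact Or.inr (Set.mem_biUnion (Finset.mem_Icc.2 ⟨h1, hM⟩) hmem)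
  calc μ {x | hitTime T A x ≤ M}
      ≤ μ ({x | ∀ i, 1 ≤ i → T^[i] x ∉ A} ∪ ⋃ i ∈ Finset.Icc 1 M, T^[i] ⁻¹' A) :=
        measure_mono hsub
    _ ≤ μ {x | ∀ i, 1 ≤ i → T^[i] x ∉ A} + μ (⋃ i ∈ Finset.Icc 1 M, T^[i] ⁻¹' A) :=
        measure_union_le _ _
    _ ≤ 0 + ∑ i ∈ Finset.Icc 1 M, μ (T^[i] ⁻¹' A) := by
        gcongr
        · exact (never_hit_null herg hA hA0).le
        · exact measure_biUnion_finset_le _ _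
    _ = ∑ i ∈ Finset.Icc 1 M, μ A := by
        rw [zero_add]
        exact Finset.sum_congr rfl fun i _ =>
          (herg.toMeasurePreserving.iterate i).measure_preimage hA.nullMeasurableSet
    _ = (M : ENNReal) * μ A := by
        rw [Finset.sum_const, Nat.card_Icc]
        simp [nsmul_eq_mul]

end AuxF

section AuxG
set_option linter.unusedSectionVars false
variable {Ω : Type*} [MeasurableSpace Ω]
variable {T : Ω → Ω} {P : Ω → ℕ} {μ : Measure Ω} [IsProbabilityMeasure μ]

lemma measurable_wd (hT : Measurable T) (hP : Measurable P) (n : ℕ) :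
    Measurable (fun z : Ω => (fun i : Fin n => P (T^[(i:ℕ)] z))) :=
  measurable_pi_lambda _ fun i => hP.comp (hT.iterate i)

lemma measurable_measure_cylAt (hT : Measurable T) (hP : Measurable P) (n : ℕ) :
    Measurable fun z => μ (cylAt T P n z) := by
  have hrw : (fun z => μ (cylAt T P n z))
      = (fun w : Fin n → ℕ => μ (cylW T P n w)) ∘ (fun z => (fun i : Fin n => P (T^[(i:ℕ)] z))) :=
    funext fun z => by rw [cylAt_eq_cylW]; rfl
  rw [hrw]
  exact (measurable_of_countable _).comp (measurable_wd hT hP n)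

lemma mem_cylAt_iff (n : ℕ) (y z : Ω) :
    y ∈ cylAt T P n z ↔
      (fun j : Fin n => P (T^[(j:ℕ)] y)) = (fun j : Fin n => P (T^[(j:ℕ)] z)) := by
  constructor
  · intro hy
    funext j
    exact hy j j.2
  · intro hy j hj
    exact congrFun hy ⟨j, hj⟩

lemma measurableSet_hit_pair (hT : Measurable T) (hP : Measurable P) (n i : ℕ) :
    MeasurableSet {q : Ω × Ω | T^[i] q.1 ∈ cylAt T P n q.2} := by
  have hrw : {q : Ω × Ω | T^[i] q.1 ∈ cylAt T P n q.2}
      = {q : Ω × Ω | (fun j : Fin n => P (T^[(j:ℕ)] (T^[i] q.1)))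
          = (fun j : Fin n => P (T^[(j:ℕ)] q.2))} := by
    ext q; exact mem_cylAt_iff n _ _
  rw [hrw]
  exact measurableSet_eq_fun
    ((measurable_wd hT hP n).comp ((hT.iterate i).comp measurable_fst))
    ((measurable_wd hT hP n).comp measurable_snd)

lemma measurableSet_hitTime_le_pair (hT : Measurable T) (hP : Measurable P) (n M : ℕ) :
    MeasurableSet {q : Ω × Ω | hitTime T (cylAt T P n q.2) q.1 ≤ M} := by
  have hrw : {q : Ω × Ω | hitTime T (cylAt T P n q.2) q.1 ≤ M}
      = (⋂ i ∈ {i : ℕ | 1 ≤ i}, {q : Ω × Ω | T^[i] q.1 ∈ cylAt T P n q.2}ᶜ)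
        ∪ ⋃ i ∈ Finset.Icc 1 M, {q : Ω × Ω | T^[i] q.1 ∈ cylAt T P n q.2} := by
    ext q
    simp only [Set.mem_union, Set.mem_iInter, Set.mem_compl_iff, Set.mem_setOf_eq,
      Set.mem_iUnion, Finset.mem_Icc, exists_prop]
    rw [hitTime_le_iff]
    constructor
    · rintro (hnever | ⟨i, h1, hM, hmem⟩)
      · exact Or.inl hnever
      · exact Or.inr ⟨i, ⟨h1, hM⟩, hmem⟩
    · rintro (hnever | ⟨i, ⟨h1, hM⟩, hmem⟩)
      · exact Or.inl hnever
      · exact Or.inr ⟨i, h1, hM, hmem⟩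
  rw [hrw]
  exact ((MeasurableSet.biInter (Set.to_countable _)
      fun i _ => (measurableSet_hit_pair hT hP n i).compl).union
    (MeasurableSet.biUnion (Finset.Icc 1 M).countable_toSet
      fun i _ => measurableSet_hit_pair hT hP n i))

/-- product-measure bound for simultaneous small cylinder & early entrance -/
lemma prod_hitTime_bound (herg : Ergodic T μ) (hT : Measurable T) (hP : Measurable P)
    (n M : ℕ) (r : ℝ) (hr : 0 ≤ r) :
    μ.prod μ {q : Ω × Ω | (0 < μ (cylAt T P n q.2) ∧ (μ (cylAt T P n q.2)).toReal ≤ r)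
        ∧ hitTime T (cylAt T P n q.2) q.1 ≤ M}
      ≤ (M : ENNReal) * ENNReal.ofReal r := by
  set G : Set Ω := {z | 0 < μ (cylAt T P n z) ∧ (μ (cylAt T P n z)).toReal ≤ r} with hG_def
  have hGmeas : MeasurableSet G := by
    have h1 := measurable_measure_cylAt (μ := μ) hT hP n
    exact (h1 measurableSet_Ioi).inter ((h1.ennreal_toReal) measurableSet_Iic)
  set Bset : Set (Ω × Ω) := {q : Ω × Ω | q.2 ∈ G ∧ hitTime T (cylAt T P n q.2) q.1 ≤ M}
    with hB_def
  have hBmeas : MeasurableSet Bset :=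
    (measurable_snd hGmeas).inter (measurableSet_hitTime_le_pair hT hP n M)
  have hBeq : {q : Ω × Ω | (0 < μ (cylAt T P n q.2) ∧ (μ (cylAt T P n q.2)).toReal ≤ r)
      ∧ hitTime T (cylAt T P n q.2) q.1 ≤ M} = Bset := rfl
  rw [hBeq, MeasureTheory.Measure.prod_apply_symm hBmeas]
  have hsec : ∀ z : Ω, μ ((fun x => (x, z)) ⁻¹' Bset)
      ≤ G.indicator (fun _ => (M : ENNReal) * ENNReal.ofReal r) z := by
    intro z
    by_cases hz : z ∈ G
    · have hpre : (fun x => (x, z)) ⁻¹' Bset = {x | hitTime T (cylAt T P n z) x ≤ M} := by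
        ext x
        simp only [hB_def, Set.mem_preimage, Set.mem_setOf_eq, hz, true_and]
      rw [hpre, Set.indicator_of_mem hz]
      calc μ {x | hitTime T (cylAt T P n z) x ≤ M}
          ≤ (M : ENNReal) * μ (cylAt T P n z) :=
            measure_hitTime_le herg (measurableSet_cylAt hT hP n z) hz.1.ne' M
        _ ≤ (M : ENNReal) * ENNReal.ofReal r := by
            gcongr
            exact (ENNReal.le_ofReal_iff_toReal_le (measure_ne_top μ _) hr).2 hz.2
    · have hpre : (fun x => (x, z)) ⁻¹' Bset = ∅ := by
        ext x
        simp only [hB_def, Set.mem_preimage, Set.mem_setOf_eq, hz, false_and,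
          Set.mem_empty_iff_false]
      rw [hpre, Set.indicator_of_notMem hz]
      simp
  calc ∫⁻ z, μ ((fun x => (x, z)) ⁻¹' Bset) ∂μ
      ≤ ∫⁻ z, G.indicator (fun _ => (M : ENNReal) * ENNReal.ofReal r) z ∂μ :=
        MeasureTheory.lintegral_mono hsec
    _ = (M : ENNReal) * ENNReal.ofReal r * μ G := by
        rw [MeasureTheory.lintegral_indicator hGmeas]
        simp [MeasureTheory.setLIntegral_const]
    _ ≤ (M : ENNReal) * ENNReal.ofReal r * 1 := by
        gcongr
        exact prob_le_one
    _ = (M : ENNReal) * ENNReal.ofReal r := by rw [mul_one]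

/-- SMB consequence: eventually the cylinder at `z` has measure in `(0, e^{-nd}]`. -/
lemma smb_eventually (h d : ℝ) (hd0 : 0 < d) (hdh : d < h)
    (hSMB : SMB T P μ h) :
    ∀ᵐ z ∂μ, ∀ᶠ n : ℕ in atTop,
      0 < μ (cylAt T P n z) ∧ (μ (cylAt T P n z)).toReal ≤ Real.exp (-((n:ℝ) * d)) := by
  filter_upwards [hSMB] with z hz
  have hev1 : ∀ᶠ n : ℕ in atTop,
      d < -Real.log ((μ (cylAt T P n z)).toReal) / (n:ℝ) :=
    hz.eventually_const_lt hdh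
  filter_upwards [hev1, Filter.eventually_ge_atTop 1] with n hn hn1
  have hnpos : (0:ℝ) < n := by exact_mod_cast hn1
  set t := (μ (cylAt T P n z)).toReal with ht_def
  have hlog : Real.log t < -((n:ℝ) * d) := by
    have h2 : d * (n:ℝ) < -Real.log t := (lt_div_iff₀ hnpos).1 hn
    linarith
  have htne : t ≠ 0 := by
    intro h0
    rw [h0, Real.log_zero] at hlog
    nlinarith
  have htpos : 0 < t := lt_of_le_of_ne ENNReal.toReal_nonneg (Ne.symm htne)
  constructor
  · rw [ht_def] at htpos
    exact (ENNReal.toReal_pos_iff.1 htpos).1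
  · calc t = Real.exp (Real.log t) := (Real.exp_log htpos).symm
      _ ≤ Real.exp (-((n:ℝ) * d)) := Real.exp_le_exp.2 hlog.le

end AuxG

section AuxH
set_option linter.unusedSectionVars false

lemma summable_exp_neg (d : ℝ) (hd : 0 < d) :
    Summable (fun n : ℕ => Real.exp (-d * n)) := by
  have hlt : Real.exp (-d) < 1 := Real.exp_lt_one_iff.2 (by linarith)
  refine Summable.congr (summable_geometric_of_lt_one (Real.exp_pos _).le hlt) fun n => ?_
  rw [← Real.exp_nat_mul]
  ring_nf

lemma summable_linear_exp (d : ℝ) (hd : 0 < d) :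
    Summable (fun n : ℕ => (n:ℝ) * Real.exp (-d * n)) := by
  have hlt : ‖Real.exp (-d)‖ < 1 := by
    rw [Real.norm_eq_abs, abs_of_pos (Real.exp_pos _)]
    exact Real.exp_lt_one_iff.2 (by linarith)
  refine Summable.congr (summable_pow_mul_geometric_of_norm_lt_one 1 hlt) fun n => ?_
  rw [← Real.exp_nat_mul, pow_one]
  ring_nf

end AuxH

set_option maxHeartbeats 1000000 in
/-- Lower bound on hitting numbers for `φ`-mixing measures: under condition (I) or (II),
for a.e. `(x,z)` eventually `N_{U_n, τ_n^z(x)}(x) ≥ (μ(U_n)/2) e^{n(h_μ − ε)}`. -/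
theorem hitNum_lower_bound
    (μ : Measure Ω) [IsProbabilityMeasure μ] (T : Ω → Ω) (P : Ω → ℕ)
    (hP : Measurable P) (herg : Ergodic T μ) (hgen : GeneratingPartition T P μ)
    (h : ℝ) (hh : 0 ≤ h) (hSMB : SMB T P μ h)
    (φ : ℕ → ℝ) (hφ : PhiMixing T P μ φ) (hφsum : Summable φ)
    (ε : ℝ) (hε : 0 < ε)
    (U : ℕ → Set Ω) (hU : ∀ n, UnionOfCyl T P n (U n))
    (γ : ℕ → ℝ) (hγ : ∀ n, 0 < γ n)
    (C a b : ℝ) (hC : 0 < C) (ha : 0 < a) (hb : 0 < b)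
    (hcase :
      (∀ᶠ n : ℕ in atTop,
        C * Real.exp (-(γ n * (h + ε))) ≤ (μ (U n)).toReal ∧
        a * (n : ℝ) ^ b ≤ ((n : ℝ) - γ n) * h - ε * ((n : ℝ) + γ n)) ∨
      (∀ᶠ n : ℕ in atTop,
        C * Real.exp (-(γ n * (h - ε))) ≤ (μ (U n)).toReal ∧
        a * (n : ℝ) ^ b ≤ ((n : ℝ) - γ n) * (h - ε))) :
    ∀ᵐ p ∂(μ.prod μ), ∀ᶠ n : ℕ in atTop,
      (μ (U n)).toReal / 2 * Real.exp (n * (h - ε)) ≤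
        (hitNum T (U n) (hitTime T (cylAt T P n p.2) p.1) p.1 : ℝ) := by
  classical
  have hT : Measurable T := herg.measurable
  have hφ0 : ∀ i, 0 ≤ φ i := phi_nonneg hφ.1 hφsum
  set Φ : ℝ := ∑' i, φ i with hΦ_def
  have hΦ0 : 0 ≤ Φ := tsum_nonneg hφ0
  choose S hS using hU
  set pU : ℕ → ℝ := fun n => (μ (U n)).toReal with hpU_def
  have hpU0 : ∀ n, 0 ≤ pU n := fun n => ENNReal.toReal_nonneg
  have hpU1 : ∀ n, pU n ≤ 1 := fun n => by
    simpa using ENNReal.toReal_mono ENNReal.one_ne_top (prob_le_one (μ := μ) (s := U n))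
  have hrpow0 : ∀ n : ℕ, 0 ≤ a * (n:ℝ) ^ b :=
    fun n => mul_nonneg ha.le (Real.rpow_nonneg (Nat.cast_nonneg n) b)
  -- Step 1 : ε < h
  have hεh : ε < h := by
    rcases hcase with hc | hc
    · obtain ⟨n, hcn, hn1⟩ := (hc.and (Filter.eventually_ge_atTop 1)).exists
      have hnpos : (0:ℝ) < n := by exact_mod_cast hn1
      have hnb : 0 < a * (n:ℝ) ^ b := mul_pos ha (Real.rpow_pos_of_pos hnpos b)
      nlinarith [hcn.2, hγ n, hh, mul_nonneg (hγ n).le hh]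
    · by_contra hle
      push_neg at hle
      have hab : Tendsto (fun n : ℕ => a * (n:ℝ) ^ b) atTop atTop := by
        apply Tendsto.const_mul_atTop ha
        exact (tendsto_rpow_atTop hb).comp tendsto_natCast_atTop_atTop
      have hexp1 : Tendsto (fun n : ℕ => C * Real.exp (a * (n:ℝ) ^ b)) atTop atTop :=
        Tendsto.const_mul_atTop hC (Real.tendsto_exp_atTop.comp hab)
      obtain ⟨n, hn⟩ :=
        ((hc.and (hexp1.eventually_gt_atTop 1)).and (Filter.eventually_ge_atTop 1)).exists
      obtain ⟨⟨⟨hclow, hcexp⟩, h1C⟩, hn1⟩ := hn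
      have hnpos : (0:ℝ) ≤ n := Nat.cast_nonneg n
      have hkey : a * (n:ℝ) ^ b ≤ -(γ n * (h - ε)) := by
        have hn_he : (n:ℝ) * (h - ε) ≤ 0 := mul_nonpos_of_nonneg_of_nonpos hnpos (by linarith)
        nlinarith [hcexp]
      have : C * Real.exp (a * (n:ℝ) ^ b) ≤ pU n :=
        le_trans (mul_le_mul_of_nonneg_left (Real.exp_le_exp.2 hkey) hC.le) hclow
      have := this.trans (hpU1 n)
      linarith
  -- Step 2 : eventual key inequality
  have hkey : ∀ᶠ n : ℕ in atTop,
      C * Real.exp (ε/2 * n) ≤ Real.exp ((n:ℝ) * (h - ε/2)) * pU n := by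
    rcases hcase with hc | hc
    · filter_upwards [hc] with n hcn
      calc C * Real.exp (ε/2 * n)
          ≤ C * Real.exp ((n:ℝ) * (h - ε/2) + -(γ n * (h + ε))) := by
            apply mul_le_mul_of_nonneg_left _ hC.le
            apply Real.exp_le_exp.2
            nlinarith [hcn.2, hrpow0 n]
        _ = Real.exp ((n:ℝ) * (h - ε/2)) * (C * Real.exp (-(γ n * (h + ε)))) := by
            rw [Real.exp_add]; ring
        _ ≤ Real.exp ((n:ℝ) * (h - ε/2)) * pU n :=
            mul_le_mul_of_nonneg_left hcn.1 (Real.exp_pos _).le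
    · filter_upwards [hc] with n hcn
      calc C * Real.exp (ε/2 * n)
          ≤ C * Real.exp ((n:ℝ) * (h - ε/2) + -(γ n * (h - ε))) := by
            apply mul_le_mul_of_nonneg_left _ hC.le
            apply Real.exp_le_exp.2
            nlinarith [hcn.2, hrpow0 n]
        _ = Real.exp ((n:ℝ) * (h - ε/2)) * (C * Real.exp (-(γ n * (h - ε)))) := by
            rw [Real.exp_add]; ring
        _ ≤ Real.exp ((n:ℝ) * (h - ε/2)) * pU n :=
            mul_le_mul_of_nonneg_left hcn.1 (Real.exp_pos _).le
  -- the deterministic time scale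
  set M : ℕ → ℕ := fun n => ⌈Real.exp ((n:ℝ) * (h - ε/2))⌉₊ with hM_def
  have hMge : ∀ n : ℕ, Real.exp ((n:ℝ) * (h - ε/2)) ≤ (M n : ℝ) := fun n => Nat.le_ceil _
  have hMle : ∀ n : ℕ, (M n : ℝ) ≤ Real.exp ((n:ℝ) * (h - ε/2)) + 1 :=
    fun n => (Nat.ceil_lt_add_one (Real.exp_pos _).le).le
  -- Borel-Cantelli 1 : Chebyshev bound
  set Acheb : ℕ → Set Ω := fun n =>
    {x | ((hitNum T (U n) (M n) x : ℕ) : ℝ) ≤ ((M n : ℝ) + 1) * pU n / 2} with hA_def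
  have hBC1 : ∀ᵐ x ∂μ, ∀ᶠ n in atTop, x ∉ Acheb n := by
    apply bc_helper μ Acheb (fun n => (8/C) * ((n:ℝ) + Φ) * Real.exp (-(ε/2) * n))
    · intro n; positivity
    · have hs1 := (summable_linear_exp (ε/2) (by linarith)).mul_left (8/C)
      have hs2 := ((summable_exp_neg (ε/2) (by linarith)).mul_left Φ).mul_left (8/C)
      refine Summable.congr (hs1.add hs2) fun n => ?_
      ring
    · filter_upwards [hkey] with n hk
      have hc1pos : (0:ℝ) < (M n : ℝ) + 1 := by positivity
      have hKc1 : Real.exp ((n:ℝ) * (h - ε/2)) ≤ (M n : ℝ) + 1 := (hMge n).trans (by linarith)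
      have hcp : C * Real.exp (ε/2 * n) ≤ ((M n : ℝ) + 1) * pU n :=
        hk.trans (mul_le_mul_of_nonneg_right hKc1 (hpU0 n))
      have hppos : 0 < pU n := by
        rcases lt_or_ge 0 (pU n) with h' | h'
        · exact h'
        · exfalso
          have : ((M n : ℝ) + 1) * pU n ≤ 0 := mul_nonpos_of_nonneg_of_nonpos hc1pos.le h'
          nlinarith [Real.exp_pos (ε/2 * (n:ℝ)), mul_pos hC (Real.exp_pos (ε/2 * (n:ℝ)))]
      have hcheb := cheby_main hT hP herg.toMeasurePreserving hφ hφsum n (M n) (S n) (hS n)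
      -- from (c/2)^2 * m ≤ 2 c (n pU + Φ pU) conclude m ≤ v n
      set m := (μ (Acheb n)).toReal with hm_def
      have hm0 : 0 ≤ m := ENNReal.toReal_nonneg
      have hcheb' : (((M n : ℝ) + 1) * pU n / 2)^2 * m
          ≤ 2 * ((M n : ℝ) + 1) * ((n:ℝ) * pU n + Φ * pU n) := hcheb
      have hexp1 : Real.exp (-(ε/2) * (n:ℝ)) * Real.exp (ε/2 * (n:ℝ)) = 1 := by
        rw [← Real.exp_add, show -(ε/2) * (n:ℝ) + ε/2 * (n:ℝ) = 0 by ring, Real.exp_zero]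
      have hvm : m ≤ (8/C) * ((n:ℝ) + Φ) * Real.exp (-(ε/2) * n) := by
        have hd : 0 < ((M n : ℝ) + 1) * pU n := mul_pos hc1pos hppos
        have hn0 : (0:ℝ) ≤ (n:ℝ) := Nat.cast_nonneg n
        have hEp : 0 < Real.exp (-(ε/2) * (n:ℝ)) := Real.exp_pos _
        -- m ≤ 8 (n+Φ) / ((Mn+1) pU)
        have step : m ≤ 8 * ((n:ℝ) + Φ) / (((M n : ℝ) + 1) * pU n) := by
          rw [le_div_iff₀ hd]
          have h5 : (((M n:ℝ)+1) * pU n) * (m * (((M n:ℝ)+1) * pU n))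
              ≤ (((M n:ℝ)+1) * pU n) * (8 * ((n:ℝ)+Φ)) := by nlinarith [hcheb']
          exact le_of_mul_le_mul_left h5 hd
        refine step.trans ?_
        rw [div_le_iff₀ hd]
        have hCE : C * Real.exp (ε/2 * n) ≤ ((M n : ℝ) + 1) * pU n := hcp
        have h8 : 0 ≤ 8 * ((n:ℝ) + Φ) := by positivity
        calc 8 * ((n:ℝ) + Φ)
            = (8/C) * ((n:ℝ) + Φ) * Real.exp (-(ε/2) * n) * (C * Real.exp (ε/2 * n)) := by
              have hCC : C / C = 1 := div_self hC.ne'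
              have hr : (8/C) * ((n:ℝ) + Φ) * Real.exp (-(ε/2) * (n:ℝ)) * (C * Real.exp (ε/2 * (n:ℝ)))
                  = 8 * ((n:ℝ) + Φ) * (Real.exp (-(ε/2) * (n:ℝ)) * Real.exp (ε/2 * (n:ℝ))) * (C/C) := by
                ring
              rw [hr, hexp1, hCC]
              ring
          _ ≤ (8/C) * ((n:ℝ) + Φ) * Real.exp (-(ε/2) * n) * (((M n : ℝ) + 1) * pU n) := by
              apply mul_le_mul_of_nonneg_left hCE
              positivity
      rw [hm_def] at hvm
      exact (ENNReal.le_ofReal_iff_toReal_le (measure_ne_top μ _) (by positivity)).2 hvm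
  -- Borel-Cantelli 2 : early entrance
  set Bset : ℕ → Set (Ω × Ω) := fun n =>
    {q : Ω × Ω | (0 < μ (cylAt T P n q.2)
        ∧ (μ (cylAt T P n q.2)).toReal ≤ Real.exp (-((n:ℝ) * (h - ε/4))))
      ∧ hitTime T (cylAt T P n q.2) q.1 ≤ M n} with hB_def
  have hBC2 : ∀ᵐ q ∂(μ.prod μ), ∀ᶠ n in atTop, q ∉ Bset n := by
    apply bc_helper (μ.prod μ) Bset
      (fun n => Real.exp (-(ε/4) * n) + Real.exp (-(h - ε/4) * n))
    · intro n; positivity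
    · exact (summable_exp_neg (ε/4) (by linarith)).add
        (summable_exp_neg (h - ε/4) (by linarith))
    · apply Filter.Eventually.of_forall
      intro n
      have hbound := prod_hitTime_bound (μ := μ) herg hT hP n (M n)
        (Real.exp (-((n:ℝ) * (h - ε/4)))) (Real.exp_pos _).le
      refine le_trans hbound ?_
      have h1 : ((M n : ℕ) : ENNReal) * ENNReal.ofReal (Real.exp (-((n:ℝ) * (h - ε/4))))
          = ENNReal.ofReal ((M n : ℝ) * Real.exp (-((n:ℝ) * (h - ε/4)))) := by
        rw [ENNReal.ofReal_mul (Nat.cast_nonneg (M n))]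
        congr 1
        exact (ENNReal.ofReal_natCast (M n)).symm
      rw [h1]
      apply ENNReal.ofReal_le_ofReal
      have hstep : (M n : ℝ) * Real.exp (-((n:ℝ) * (h - ε/4)))
          ≤ (Real.exp ((n:ℝ) * (h - ε/2)) + 1) * Real.exp (-((n:ℝ) * (h - ε/4))) :=
        mul_le_mul_of_nonneg_right (hMle n) (Real.exp_pos _).le
      refine hstep.trans ?_
      have e2 : Real.exp ((n:ℝ) * (h - ε/2)) * Real.exp (-((n:ℝ) * (h - ε/4)))
          = Real.exp (-(ε/4) * n) := by
        rw [← Real.exp_add]; congr 1; ring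
      have e3 : Real.exp (-((n:ℝ) * (h - ε/4))) = Real.exp (-(h - ε/4) * n) := by
        congr 1; ring
      rw [add_mul, one_mul, e2, e3]
  -- SMB control on the second coordinate
  have hG : ∀ᵐ z ∂μ, ∀ᶠ n : ℕ in atTop,
      0 < μ (cylAt T P n z)
        ∧ (μ (cylAt T P n z)).toReal ≤ Real.exp (-((n:ℝ) * (h - ε/4))) :=
    smb_eventually h (h - ε/4) (by linarith) (by linarith) hSMB
  -- combine everything
  have hae := ((ae_of_fst μ μ hBC1).and ((ae_of_snd μ μ hG).and hBC2))
  filter_upwards [hae] with q hq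
  obtain ⟨hq1, hq2, hq3⟩ := hq
  filter_upwards [hq1, hq2, hq3] with n h1 h2 h3
  -- from h2 and h3 : the entrance time exceeds M n
  have hτ : M n < hitTime T (cylAt T P n q.2) q.1 := by
    apply gt_of_hitTime_not_le
    intro hle
    exact h3 ⟨h2, hle⟩
  have hmono : hitNum T (U n) (M n) q.1
      ≤ hitNum T (U n) (hitTime T (cylAt T P n q.2) q.1) q.1 :=
    hitNum_mono (U n) hτ.le q.1
  have h1' : ((M n : ℝ) + 1) * pU n / 2 < ((hitNum T (U n) (M n) q.1 : ℕ) : ℝ) := by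
    by_contra hcon
    push_neg at hcon
    exact h1 hcon
  have hMexp : Real.exp ((n:ℝ) * (h - ε)) ≤ (M n : ℝ) + 1 := by
    refine le_trans (Real.exp_le_exp.2 ?_) ((hMge n).trans (by linarith))
    nlinarith
  have hfinal : pU n / 2 * Real.exp ((n:ℝ) * (h - ε)) ≤ ((M n : ℝ) + 1) * pU n / 2 := by
    have := mul_le_mul_of_nonneg_left hMexp (by positivity : (0:ℝ) ≤ pU n / 2)
    linarith [this]
  have hcast : ((hitNum T (U n) (M n) q.1 : ℕ) : ℝ)
      ≤ ((hitNum T (U n) (hitTime T (cylAt T P n q.2) q.1) q.1 : ℕ) : ℝ) := by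
    exact_mod_cast hmono
  calc (μ (U n)).toReal / 2 * Real.exp ((n:ℝ) * (h - ε))
      = pU n / 2 * Real.exp ((n:ℝ) * (h - ε)) := rfl
    _ ≤ ((M n : ℝ) + 1) * pU n / 2 := hfinal
    _ ≤ ((hitNum T (U n) (hitTime T (cylAt T P n q.2) q.1) q.1 : ℕ) : ℝ) :=
        le_trans h1'.le hcast
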